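/- In the Algorithm 1 setting, let F: [0,1]^n → [0,∞) be a nonnegative continuously differentiable DR-submodular function, let q* ∈ Q and p* ∈ P satisfy q* + p* ≤ 1, and set o = q* + p*. Fix an integer 1 ≤ i ≤ 1/ε and write w = y⁽ⁱ⁻¹⁾⊛z⁽ⁱ⁻¹⁾. If ⟨∇F(w)⊙(1 − z⁽ⁱ⁻¹⁾), a⁽ⁱ⁾ + b⁽ⁱ⁾⊙(1 − y⁽ⁱ⁻¹⁾)⟩ ≥ ⟨∇F(w)⊙(1 − z⁽ⁱ⁻¹⁾), q* + p*⊙(1 − y⁽ⁱ⁻¹⁾)⟩, then ⟨∇F(w)⊙(1 − z⁽ⁱ⁻¹⁾), a⁽ⁱ⁾ + b⁽ⁱ⁾⊙(1 − y⁽ⁱ⁻¹⁾)⟩ ≥ (1−ε)^{i−1}(1−m)·F(o) + (1−ε)^{i−1}(1−m)·F(z⁽ⁱ⁻¹⁾) + ⟨∇F(w), y⁽ⁱ⁻¹⁾⊙(1 − z⁽ⁱ⁻¹⁾)⟩ − 2·F(w). -/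

import Mathlib

open scoped InnerProductSpace
open Pointwise

noncomputable section

/-- Vectors in `ℝ^n`, with the Euclidean (ℓ₂) norm and inner product. -/
abbrev Vec (n : ℕ) := EuclideanSpace ℝ (Fin n)

/-- Membership in the box `[0,1]^n`. -/
def inBox {n : ℕ} (x : Vec n) : Prop := ∀ j, 0 ≤ x j ∧ x j ≤ 1

/-- Coordinate-wise (Hadamard) product `x ⊙ y`. -/
def had {n : ℕ} (x y : Vec n) : Vec n := WithLp.toLp 2 (fun j => x j * y j)

/-- Coordinate-wise probabilistic sum `x ⊛ y`. -/
def psum {n : ℕ} (x y : Vec n) : Vec n := WithLp.toLp 2 (fun j => x j + y j - x j * y j)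

/-- The vector `1 - x` (coordinate-wise). -/
def oneM {n : ℕ} (x : Vec n) : Vec n := WithLp.toLp 2 (fun j => 1 - x j)

/-- ℓ∞-norm. -/
def normInf {n : ℕ} (x : Vec n) : ℝ := ⨆ j, |x j|

/-- DR-submodularity of `F : [0,1]^n → ℝ`. -/
def DRSubmodular {n : ℕ} (F : Vec n → ℝ) : Prop :=
  ∀ a b : Vec n, inBox a → inBox b → (∀ j, a j ≤ b j) →
    ∀ k : ℝ, 0 < k → ∀ i : Fin n, inBox (b + EuclideanSpace.single i k) →
      F (b + EuclideanSpace.single i k) - F b ≤ F (a + EuclideanSpace.single i k) - F a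

/-- `P` is down-closed (with respect to the domain `[0,1]^n`). -/
def downClosed {n : ℕ} (P : Set (Vec n)) : Prop :=
  ∀ x y : Vec n, (∀ j, 0 ≤ x j) → (∀ j, x j ≤ y j) → y ∈ P → x ∈ P

/-- The Algorithm 1 setting: `Q ⊆ [0,1]^n` convex, `P ⊆ [0,1]^n` down-closed convex,
`ε ∈ (0,1)` with `1/ε = N ∈ ℕ`, and sequences `y⁽ⁱ⁾, z⁽ⁱ⁾` built from `a⁽ⁱ⁾ ∈ Q`,
`b⁽ⁱ⁾ ∈ P` satisfying `a⁽ⁱ⁾ + b⁽ⁱ⁾ ⊙ (1 − y⁽ⁱ⁻¹⁾) ≤ 1`, via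
`y⁽ⁱ⁾ = (1−ε)·y⁽ⁱ⁻¹⁾ + ε·a⁽ⁱ⁾` and `z⁽ⁱ⁾ = z⁽ⁱ⁻¹⁾ + ε·(1 − z⁽ⁱ⁻¹⁾) ⊙ b⁽ⁱ⁾`. -/
structure Alg1Setting {n : ℕ} (Q P : Set (Vec n)) (ε : ℝ) (N : ℕ)
    (y z a b : ℕ → Vec n) : Prop where
  hQbox : ∀ x ∈ Q, inBox x
  hQconv : Convex ℝ Q
  hPbox : ∀ x ∈ P, inBox x
  hPconv : Convex ℝ P
  hPdown : downClosed P
  hε0 : 0 < ε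
  hε1 : ε < 1
  hεN : (N : ℝ) * ε = 1
  hy0Q : y 0 ∈ Q
  hy0min : ∀ x ∈ Q, normInf (y 0) ≤ normInf x
  hz0 : z 0 = 0
  haQ : ∀ i, 1 ≤ i → i ≤ N → a i ∈ Q
  hbP : ∀ i, 1 ≤ i → i ≤ N → b i ∈ P
  hfeas : ∀ i, 1 ≤ i → i ≤ N → ∀ j, a i j + b i j * (1 - y (i-1) j) ≤ 1
  hyrec : ∀ i, 1 ≤ i → i ≤ N → y i = (1-ε) • y (i-1) + ε • a i
  hzrec : ∀ i, 1 ≤ i → i ≤ N → z i = z (i-1) + ε • had (oneM (z (i-1))) (b i)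

/-!
Write `Y = y⁽ᵏ⁾`, `Z = z⁽ᵏ⁾` with `k = i - 1`, and `w = Y ⊛ Z`. Coordinatewise,
`⟪∇F(w) ⊙ (1 - Z), q* + p* ⊙ (1 - Y)⟫` equals
`⟪∇F(w), o ⊙ (1 - w)⟫ + ⟪∇F(w), Y ⊙ (1 - Z)⟫ - ⟪∇F(w), (1 - q*) ⊙ Y ⊙ (1 - Z)⟫`.
Its partial derivatives being antitone, a DR-submodular `F` is concave along nonnegative
directions, so the first term is at least `F(w + o ⊙ (1 - w)) - F(w)` and the last is at most
`F(w) - F(Z + q* ⊙ Y ⊙ (1 - Z))`.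
Now `w + o ⊙ (1 - w) = o + w ⊙ (1 - o)` and `Z + q* ⊙ Y ⊙ (1 - Z)` move `o` and `Z` by at most
a fraction `c ≥ max w` of the room left to the top of the box; concavity along that ray and
`F ≥ 0` at its exit point make them worth at least `(1 - c)·F(o)` and `(1 - c)·F(Z)`.
Finally the invariant `(1 - Y)(1 - Z) ≥ (1 - ε)^k (1 - m)` allows `c = 1 - (1 - ε)^k (1 - m)`.
-/

open Set Filter Topology

section Coordinates

variable {n : ℕ}

@[simp] lemma had_apply (x y : Vec n) (j : Fin n) : had x y j = x j * y j := rfl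

@[simp] lemma psum_apply (x y : Vec n) (j : Fin n) : psum x y j = x j + y j - x j * y j := rfl

@[simp] lemma oneM_apply (x : Vec n) (j : Fin n) : oneM x j = 1 - x j := rfl

lemma inner_eq_sum_mul (u v : Vec n) : ⟪u, v⟫_ℝ = ∑ j, u j * v j := by
  simp [PiLp.inner_apply, mul_comm]

lemma normInf_nonneg (x : Vec n) : 0 ≤ normInf x :=
  Real.iSup_nonneg fun _ => abs_nonneg _

lemma normInf_le_one {x : Vec n} (hx : inBox x) : normInf x ≤ 1 :=
  Real.iSup_le (fun j => abs_le.mpr ⟨by linarith [(hx j).1], (hx j).2⟩) zero_le_one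

lemma apply_le_normInf (x : Vec n) (j : Fin n) : x j ≤ normInf x :=
  (le_abs_self _).trans (le_ciSup (Set.finite_range fun j => |x j|).bddAbove j)

lemma inBox_psum {x y : Vec n} (hx : inBox x) (hy : inBox y) : inBox (psum x y) := fun j => by
  have := hx j; have := hy j
  simp only [psum_apply]
  constructor <;> nlinarith

lemma inBox_add_smul {x v : Vec n} {T t : ℝ} (hx : inBox x) (hv : ∀ j, 0 ≤ v j)
    (hT : inBox (x + T • v)) (ht : t ∈ Icc 0 T) : inBox (x + t • v) := fun j => by
  have := hx j; have := (hT j).2; have := hv j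
  simp only [PiLp.add_apply, PiLp.smul_apply, smul_eq_mul] at *
  constructor <;> nlinarith [ht.1, ht.2]

end Coordinates

lemma HasGradientAt.hasDerivAt_add_smul {E : Type*} [NormedAddCommGroup E] [InnerProductSpace ℝ E]
    [CompleteSpace E] {f : E → ℝ} {g x v : E} {t : ℝ} (h : HasGradientAt f g (x + t • v)) :
    HasDerivAt (fun s : ℝ => f (x + s • v)) ⟪g, v⟫_ℝ t := by
  have hline : HasDerivAt (fun s : ℝ => x + s • v) v t := by
    simpa using ((hasDerivAt_id t).smul_const v).const_add x
  simpa [Function.comp_def] using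
    (hasGradientAt_iff_hasFDerivAt.mp h).comp_hasDerivAt t hline

namespace DRSubmodular

variable {n : ℕ} {F : Vec n → ℝ} {G : Vec n → Vec n}

lemma gradient_apply_le (hDR : DRSubmodular F) (hG : ∀ x, inBox x → HasGradientAt F (G x) x)
    {a b : Vec n} (ha : inBox a) (hb : inBox b) (hab : ∀ j, a j ≤ b j) (j : Fin n)
    (hbj : b j < 1) : G b j ≤ G a j := by
  have slope_tendsto : ∀ x, inBox x →
      Tendsto (fun k => (F (x + EuclideanSpace.single j k) - F x) / k) (𝓝[>] 0) (𝓝 (G x j)) :=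
    fun x hx => by
    have hsingle : ∀ k : ℝ, k • EuclideanSpace.single j (1 : ℝ) = EuclideanSpace.single j k := by
      intro k; ext l; simp [PiLp.single_apply]
    have hd : HasDerivAt (fun k : ℝ => F (x + EuclideanSpace.single j k)) (G x j) 0 := by
      simpa [hsingle, EuclideanSpace.inner_single_right] using
        HasGradientAt.hasDerivAt_add_smul (x := x) (v := EuclideanSpace.single j (1 : ℝ)) (t := 0)
          (by simpa using hG x hx)
    refine ((hasDerivAt_iff_tendsto_slope.mp hd).mono_left
      (nhdsWithin_mono 0 fun k hk => ne_of_gt hk)).congr fun k => ?_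
    simp [slope, div_eq_inv_mul, ← hsingle 0]
  refine le_of_tendsto_of_tendsto (slope_tendsto b hb) (slope_tendsto a ha) ?_
  filter_upwards [Ioo_mem_nhdsGT (show (0 : ℝ) < 1 - b j by linarith)] with k hk
  have hstep : inBox (b + EuclideanSpace.single j k) := fun l => by
    by_cases hl : l = j
    · subst hl
      simp only [PiLp.add_apply, PiLp.single_apply, if_true]
      constructor <;> linarith [(hb l).1, hk.1, hk.2]
    · simpa [PiLp.single_apply, hl] using hb l
  exact div_le_div_of_nonneg_right (hDR a b ha hb hab k hk.1 j hstep) hk.1.le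

lemma concaveOn_add_smul (hDR : DRSubmodular F) (hG : ∀ x, inBox x → HasGradientAt F (G x) x)
    {x v : Vec n} {T : ℝ} (hx : inBox x) (hv : ∀ j, 0 ≤ v j) (hT : inBox (x + T • v)) :
    ConcaveOn ℝ (Icc 0 T) (fun t => F (x + t • v)) := by
  have hderiv : ∀ t ∈ Icc 0 T, HasDerivAt (fun s => F (x + s • v)) ⟪G (x + t • v), v⟫_ℝ t :=
    fun t ht => (hG _ (inBox_add_smul hx hv hT ht)).hasDerivAt_add_smul
  refine AntitoneOn.concaveOn_of_deriv (convex_Icc 0 T)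
    (fun t ht => (hderiv t ht).continuousAt.continuousWithinAt) ?_ ?_ <;> rw [interior_Icc]
  · exact fun t ht => (hderiv t (Ioo_subset_Icc_self ht)).differentiableAt.differentiableWithinAt
  -- On `(0, T)` every coordinate with `v j > 0` is still below `1`, so `gradient_apply_le` applies.
  intro s hs t ht hst
  rw [(hderiv s (Ioo_subset_Icc_self hs)).deriv, (hderiv t (Ioo_subset_Icc_self ht)).deriv,
    inner_eq_sum_mul, inner_eq_sum_mul]
  refine Finset.sum_le_sum fun j _ => ?_
  rcases (hv j).eq_or_lt with hvj | hvj
  · simp [← hvj]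
  refine mul_le_mul_of_nonneg_right (gradient_apply_le hDR hG
    (inBox_add_smul hx hv hT (Ioo_subset_Icc_self hs))
    (inBox_add_smul hx hv hT (Ioo_subset_Icc_self ht)) (fun l => ?_) j ?_) hvj.le
  · simp only [PiLp.add_apply, PiLp.smul_apply, smul_eq_mul]
    nlinarith [hv l]
  · have := (hT j).2
    simp only [PiLp.add_apply, PiLp.smul_apply, smul_eq_mul] at this ⊢
    nlinarith [ht.2]

lemma sub_le_inner_gradient (hDR : DRSubmodular F) (hG : ∀ x, inBox x → HasGradientAt F (G x) x)
    {x v : Vec n} (hx : inBox x) (hv : ∀ j, 0 ≤ v j) (hxv : inBox (x + v)) :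
    F (x + v) - F x ≤ ⟪G x, v⟫_ℝ := by
  have hconc := concaveOn_add_smul hDR hG hx hv (T := 1) (by simpa using hxv)
  simpa [slope] using hconc.slope_le_of_hasDerivAt (by simp) (by simp) one_pos
    (HasGradientAt.hasDerivAt_add_smul (t := 0) (by simpa using hG x hx))

lemma inner_gradient_le_sub (hDR : DRSubmodular F) (hG : ∀ x, inBox x → HasGradientAt F (G x) x)
    {x v : Vec n} (hx : inBox x) (hv : ∀ j, 0 ≤ v j) (hxv : inBox (x + v)) :
    ⟪G (x + v), v⟫_ℝ ≤ F (x + v) - F x := by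
  have hconc := concaveOn_add_smul hDR hG hx hv (T := 1) (by simpa using hxv)
  simpa [slope] using hconc.le_slope_of_hasDerivAt (by simp) (by simp) one_pos
    (HasGradientAt.hasDerivAt_add_smul (t := 1) (by simpa using hG _ hxv))

lemma one_sub_mul_le (hDR : DRSubmodular F) (hG : ∀ x, inBox x → HasGradientAt F (G x) x)
    (hF0 : ∀ x, inBox x → 0 ≤ F x) {x v : Vec n} {c : ℝ} (hx : inBox x) (hv : ∀ j, 0 ≤ v j)
    (hc0 : 0 ≤ c) (hc1 : c ≤ 1) (hvc : ∀ j, v j ≤ c * (1 - x j)) :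
    (1 - c) * F x ≤ F (x + v) := by
  rcases hc0.eq_or_lt with rfl | hc
  · have hv0 : v = 0 := by ext j; simpa using le_antisymm (by simpa using hvc j) (hv j)
    simp [hv0]
  have hT : inBox (x + c⁻¹ • v) := fun j => by
    have := (hx j).1; have := hv j
    have : c⁻¹ * v j ≤ 1 - x j := (inv_mul_le_iff₀ hc).mpr (hvc j)
    simp only [PiLp.add_apply, PiLp.smul_apply, smul_eq_mul]
    constructor <;> nlinarith [inv_pos.mpr hc]
  -- `1 = (1 - c) • 0 + c • c⁻¹`
  have hconc := (concaveOn_add_smul hDR hG hx hv hT).2 (left_mem_Icc.mpr (inv_pos.mpr hc).le)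
    (right_mem_Icc.mpr (inv_pos.mpr hc).le) (sub_nonneg.mpr hc1) hc.le (sub_add_cancel 1 c)
  have hFT := hF0 _ hT
  simp only [smul_eq_mul, mul_zero, zero_add, zero_smul, add_zero, mul_inv_cancel₀ hc.ne',
    one_smul] at hconc
  nlinarith

theorem le_inner_gradient_psum (hDR : DRSubmodular F)
    (hG : ∀ x, inBox x → HasGradientAt F (G x) x) (hF0 : ∀ x, inBox x → 0 ≤ F x)
    {Y Z q p : Vec n} {c : ℝ} (hY : inBox Y) (hZ : inBox Z) (hq : inBox q) (hp : inBox p)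
    (hqp : ∀ j, q j + p j ≤ 1) (hc0 : 0 ≤ c) (hc1 : c ≤ 1) (hc : ∀ j, psum Y Z j ≤ c) :
    (1 - c) * F (q + p) + (1 - c) * F Z + ⟪G (psum Y Z), had Y (oneM Z)⟫_ℝ - 2 * F (psum Y Z)
      ≤ ⟪had (G (psum Y Z)) (oneM Z), q + had p (oneM Y)⟫_ℝ := by
  set w := psum Y Z
  have hw : inBox w := inBox_psum hY hZ
  have ho' : ∀ j, 0 ≤ q j + p j ∧ q j + p j ≤ 1 := fun j => ⟨add_nonneg (hq j).1 (hp j).1, hqp j⟩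
  have ho : inBox (q + p) := fun j => by simpa using ho' j
  have hqYw : ∀ j, q j * Y j ≤ w j := fun j => by
    have := hY j; have := hZ j
    simp only [w, psum_apply]; nlinarith [mul_le_of_le_one_left (hY j).1 (hq j).2]
  have hup : F (w + had (q + p) (oneM w)) - F w ≤ ⟪G w, had (q + p) (oneM w)⟫_ℝ := by
    refine sub_le_inner_gradient hDR hG hw (fun j => ?_) (fun j => ?_) <;>
      simp only [PiLp.add_apply, had_apply, oneM_apply]
    · exact mul_nonneg (ho' j).1 (by linarith [(hw j).2])
    · have h1w : 0 ≤ 1 - w j := by linarith [(hw j).2]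
      constructor <;> nlinarith [(hw j).1, mul_nonneg (ho' j).1 h1w,
        mul_le_mul_of_nonneg_right (ho' j).2 h1w]
  have hfar : (1 - c) * F (q + p) ≤ F (q + p + had w (oneM (q + p))) := by
    refine one_sub_mul_le hDR hG hF0 ho (fun j => ?_) hc0 hc1 (fun j => ?_) <;>
      simp only [had_apply, oneM_apply]
    · exact mul_nonneg (hw j).1 (by linarith [(ho j).2])
    · exact mul_le_mul_of_nonneg_right (hc j) (by linarith [(ho j).2])
  have hnear : (1 - c) * F Z ≤ F (Z + had (had q Y) (oneM Z)) := by
    refine one_sub_mul_le hDR hG hF0 hZ (fun j => ?_) hc0 hc1 (fun j => ?_) <;>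
      simp only [had_apply, oneM_apply]
    · exact mul_nonneg (mul_nonneg (hq j).1 (hY j).1) (by linarith [(hZ j).2])
    · exact mul_le_mul_of_nonneg_right ((hqYw j).trans (hc j)) (by linarith [(hZ j).2])
  have hsplit : Z + had (had q Y) (oneM Z) + had (had (oneM q) Y) (oneM Z) = w := by
    ext j; simp only [PiLp.add_apply, had_apply, oneM_apply, w, psum_apply]; ring
  have hdown : ⟪G w, had (had (oneM q) Y) (oneM Z)⟫_ℝ ≤ F w - F (Z + had (had q Y) (oneM Z)) := by
    rw [← hsplit]
    refine inner_gradient_le_sub hDR hG (fun j => ?_) (fun j => ?_) (hsplit ▸ hw) <;>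
      have := hq j <;> have := hY j <;> have := hZ j <;>
      simp only [PiLp.add_apply, had_apply, oneM_apply]
    · constructor <;> nlinarith [mul_nonneg (hq j).1 (hY j).1, hqYw j, hw j]
    · exact mul_nonneg (mul_nonneg (by linarith) (hY j).1) (by linarith)
  have hswap : w + had (q + p) (oneM w) = q + p + had w (oneM (q + p)) := by
    ext j; simp only [PiLp.add_apply, had_apply, oneM_apply]; ring
  have hinner : ⟪had (G w) (oneM Z), q + had p (oneM Y)⟫_ℝ = ⟪G w, had (q + p) (oneM w)⟫_ℝ
      + ⟪G w, had Y (oneM Z)⟫_ℝ - ⟪G w, had (had (oneM q) Y) (oneM Z)⟫_ℝ := by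
    simp only [inner_eq_sum_mul, ← Finset.sum_add_distrib, ← Finset.sum_sub_distrib]
    refine Finset.sum_congr rfl fun j _ => ?_
    simp only [PiLp.add_apply, had_apply, oneM_apply, w, psum_apply]; ring
  rw [hswap] at hup
  linarith

end DRSubmodular

namespace Alg1Setting

variable {n : ℕ} {Q P : Set (Vec n)} {ε : ℝ} {N : ℕ} {y z a b : ℕ → Vec n}

lemma y_mem (H : Alg1Setting Q P ε N y z a b) {k : ℕ} (hk : k ≤ N) : y k ∈ Q := by
  induction k with
  | zero => exact H.hy0Q
  | succ k ih =>
    rw [H.hyrec (k + 1) (by omega) hk]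
    exact H.hQconv (ih (by omega)) (H.haQ (k + 1) (by omega) hk) (by linarith [H.hε1])
      H.hε0.le (by ring)

lemma inBox_z (H : Alg1Setting Q P ε N y z a b) {k : ℕ} (hk : k ≤ N) : inBox (z k) := by
  induction k with
  | zero => simp [H.hz0, inBox]
  | succ k ih =>
    intro j
    have hz := ih (by omega) j
    have hb := H.hPbox _ (H.hbP (k + 1) (by omega) hk) j
    have := H.hε0; have := H.hε1
    rw [H.hzrec (k + 1) (by omega) hk]
    simp only [PiLp.add_apply, PiLp.smul_apply, smul_eq_mul, had_apply, oneM_apply,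
      Nat.add_sub_cancel]
    constructor <;> nlinarith [mul_nonneg (sub_nonneg.mpr hz.2) hb.1]

lemma pow_mul_one_sub_normInf_le (H : Alg1Setting Q P ε N y z a b) {k : ℕ} (hk : k ≤ N)
    (j : Fin n) : (1 - ε) ^ k * (1 - normInf (y 0)) ≤ (1 - y k j) * (1 - z k j) := by
  induction k with
  | zero =>
    simp only [pow_zero, one_mul, H.hz0, PiLp.zero_apply, sub_zero, mul_one]
    linarith [apply_le_normInf (y 0) j]
  | succ k ih =>
    have hY := H.hQbox _ (H.y_mem (k := k) (by omega)) j
    have hZ := H.inBox_z (k := k) (by omega) j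
    have hB := H.hPbox _ (H.hbP (k + 1) (by omega) hk) j
    have hfeas := H.hfeas (k + 1) (by omega) hk j
    have hε0 := H.hε0; have hε1 := H.hε1
    rw [H.hyrec (k + 1) (by omega) hk, H.hzrec (k + 1) (by omega) hk]
    simp only [Nat.add_sub_cancel] at hfeas ⊢
    simp only [PiLp.add_apply, PiLp.smul_apply, smul_eq_mul, had_apply, oneM_apply]
    set Y := y k j; set Z := z k j; set A := a (k + 1) j; set B := b (k + 1) j
    have hYZ : 0 ≤ (1 - Y) * (1 - Z) := mul_nonneg (by linarith) (by linarith)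
    calc (1 - ε) ^ (k + 1) * (1 - normInf (y 0))
        = (1 - ε) * ((1 - ε) ^ k * (1 - normInf (y 0))) := by ring
      _ ≤ (1 - ε) * ((1 - Y) * (1 - Z)) := mul_le_mul_of_nonneg_left (ih (by omega)) (by linarith)
      _ ≤ ((1 - Y) * (1 - ε + ε * B)) * ((1 - Z) * (1 - ε * B)) := by
        -- `(1 - ε + ε B) (1 - ε B) = 1 - ε + ε² B (1 - B)`
        nlinarith [mul_nonneg hYZ
          (mul_nonneg (mul_nonneg (sq_nonneg ε) hB.1) (sub_nonneg.mpr hB.2))]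
      _ ≤ (1 - ((1 - ε) * Y + ε * A)) * ((1 - Z) * (1 - ε * B)) := by
        refine mul_le_mul_of_nonneg_right ?_ (mul_nonneg (by linarith) (by nlinarith))
        -- the gap is `ε (1 - A - B (1 - Y))`
        nlinarith [mul_nonneg hε0.le (sub_nonneg.mpr hfeas)]
      _ = (1 - ((1 - ε) * Y + ε * A)) * (1 - (Z + ε * ((1 - Z) * B))) := by ring

end Alg1Setting

theorem stmt_5_general {n : ℕ} (Q P : Set (Vec n)) (ε : ℝ) (N : ℕ) (y z a b : ℕ → Vec n)
    (H : Alg1Setting Q P ε N y z a b)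
    (F : Vec n → ℝ) (G : Vec n → Vec n)
    (hF0 : ∀ x, inBox x → 0 ≤ F x)
    (hDR : DRSubmodular F)
    (hGrad : ∀ x, inBox x → HasGradientAt F (G x) x)
    (q p : Vec n) (hq : q ∈ Q) (hp : p ∈ P) (hqp : ∀ j, q j + p j ≤ 1)
    (o : Vec n) (ho : o = q + p)
    (m : ℝ) (hm : m = normInf (y 0))
    (i : ℕ) (hiN : i ≤ N)
    (w : Vec n) (hw : w = psum (y (i-1)) (z (i-1)))
    (hobj : ⟪had (G w) (oneM (z (i-1))), q + had p (oneM (y (i-1)))⟫_ℝ ≤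
            ⟪had (G w) (oneM (z (i-1))), a i + had (b i) (oneM (y (i-1)))⟫_ℝ) :
    (1 - ε)^(i-1) * (1 - m) * F o + (1 - ε)^(i-1) * (1 - m) * F (z (i-1))
      + ⟪G w, had (y (i-1)) (oneM (z (i-1)))⟫_ℝ - 2 * F w
    ≤ ⟪had (G w) (oneM (z (i-1))), a i + had (b i) (oneM (y (i-1)))⟫_ℝ := by
  have hk : i - 1 ≤ N := by omega
  have hm0 : 0 ≤ m := hm ▸ normInf_nonneg _
  have hm1 : m ≤ 1 := hm ▸ normInf_le_one (H.hQbox _ H.hy0Q)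
  have hpow0 : 0 ≤ (1 - ε) ^ (i - 1) := pow_nonneg (by linarith [H.hε1]) _
  have hpow1 : (1 - ε) ^ (i - 1) ≤ 1 := pow_le_one₀ (by linarith [H.hε1]) (by linarith [H.hε0])
  have hbound := hDR.le_inner_gradient_psum hGrad hF0 (H.hQbox _ (H.y_mem hk)) (H.inBox_z hk)
    (H.hQbox q hq) (H.hPbox p hp) hqp (c := 1 - (1 - ε) ^ (i - 1) * (1 - m))
    (by nlinarith) (by nlinarith) fun j => by
      have := hm ▸ H.pow_mul_one_sub_normInf_le hk j
      simp only [psum_apply]; linarith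
  rw [sub_sub_cancel, ← ho, ← hw] at hbound
  exact hbound.trans hobj

/-- Lemma 4.5 / `lemma:right`: in the Algorithm 1 setting, with `F`
nonnegative continuously differentiable DR-submodular with gradient `G`, `q* ∈ Q`, `p* ∈ P`,
`q* + p* ≤ 1`, `o = q* + p*`, `m = ‖y⁽⁰⁾‖∞` and `w = y⁽ⁱ⁻¹⁾ ⊛ z⁽ⁱ⁻¹⁾`:
if the LP value at `(a⁽ⁱ⁾, b⁽ⁱ⁾)` is at least its value at `(q*, p*)`, then it is at least
`(1−ε)^{i−1}(1−m)·F(o) + (1−ε)^{i−1}(1−m)·F(z⁽ⁱ⁻¹⁾) + ⟪∇F(w), y⁽ⁱ⁻¹⁾ ⊙ (1 − z⁽ⁱ⁻¹⁾)⟫ − 2F(w)`. -/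
theorem stmt_5 {n : ℕ} (Q P : Set (Vec n)) (ε : ℝ) (N : ℕ) (y z a b : ℕ → Vec n)
    (H : Alg1Setting Q P ε N y z a b)
    (F : Vec n → ℝ) (G : Vec n → Vec n)
    (hF0 : ∀ x, inBox x → 0 ≤ F x)
    (hDR : DRSubmodular F)
    (hGrad : ∀ x, inBox x → HasGradientAt F (G x) x)
    (hGcont : ContinuousOn G {x : Vec n | inBox x})
    (q p : Vec n) (hq : q ∈ Q) (hp : p ∈ P) (hqp : ∀ j, q j + p j ≤ 1)
    (o : Vec n) (ho : o = q + p)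
    (m : ℝ) (hm : m = normInf (y 0))
    (i : ℕ) (hi1 : 1 ≤ i) (hiN : i ≤ N)
    (w : Vec n) (hw : w = psum (y (i-1)) (z (i-1)))
    (hobj : ⟪had (G w) (oneM (z (i-1))), q + had p (oneM (y (i-1)))⟫_ℝ ≤
            ⟪had (G w) (oneM (z (i-1))), a i + had (b i) (oneM (y (i-1)))⟫_ℝ) :
    (1 - ε)^(i-1) * (1 - m) * F o + (1 - ε)^(i-1) * (1 - m) * F (z (i-1))
      + ⟪G w, had (y (i-1)) (oneM (z (i-1)))⟫_ℝ - 2 * F w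
    ≤ ⟪had (G w) (oneM (z (i-1))), a i + had (b i) (oneM (y (i-1)))⟫_ℝ :=
  stmt_5_general Q P ε N y z a b H F G hF0 hDR hGrad q p hq hp hqp o ho m hm i hiN w hw hobj
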